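/- Let (X, dist, ς) be a compact metric measure space with finite measure satisfying: for all s > 0 there exists an integer N(s) such that each ball of radius 5s can be covered by N(s) balls of radius s. Let β > 0 with β ≤ ς(X)/2, and let r > 0 be such that ς(B(x,r)) ≤ β/(2N(r)) for all x ∈ X. Then there exist open sets A ⊂ D of X such that: (i) A = B(x₁,r) ∪ ⋯ ∪ B(x_l,r) with dist(x_i,x_j) ≥ 4r for i ≠ j; (ii) D = B(x₁,5r) ∪ ⋯ ∪ B(x_l,5r); (iii) ς(A) ≥ β/(2N(r)), ς(D) ≤ β, and dist(A, X\D) ≥ 4r. -/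

import Mathlib

/-!
Choose centres `y₀, y₁, …` greedily, each maximising up to the factor `4/5` the mass of
`B(y, r)` outside the `5r`-balls already chosen. A centre with positive gain is `4r`-far from the
earlier ones, so by compactness the gain eventually vanishes, and then the `5r`-balls cover `X` up
to a null set. The covering property gives `4 ς(Dₖ) ≤ 5 N ς(Aₖ)` at every stage, so stopping at the
first `k` with `β ≤ 2N ς(Aₖ)` keeps `ς(Dₖ) ≤ β` as long as the last gain is small. It is small
unless two `4r`-separated `r`-balls already carry mass `β/(2N)`, and then those two balls do.
-/

open Metric MeasureTheory Set
open scoped ENNReal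

theorem MeasureTheory.measure_le_card_mul_of_subset_biUnion {α ι : Type*} [MeasurableSpace α]
    {μ : Measure α} {s : Set α} {F : Finset ι} {t : ι → Set α} {m : ℝ≥0∞}
    (hs : s ⊆ ⋃ i ∈ F, t i) (ht : ∀ i ∈ F, μ (t i) ≤ m) : μ s ≤ F.card * m :=
  calc μ s ≤ ∑ i ∈ F, μ (t i) := (measure_mono hs).trans (measure_biUnion_finset_le F t)
    _ ≤ F.card * m := by simpa using Finset.sum_le_card_nsmul F _ m ht

theorem ENNReal.exists_mul_iSup_le_mul {ι : Type*} [Nonempty ι] {f : ι → ℝ≥0∞}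
    (hf : ⨆ i, f i ≠ ∞) {a b : ℝ≥0∞} (hab : a < b) : ∃ i, a * ⨆ j, f j ≤ b * f i := by
  rcases eq_or_ne (⨆ j, f j) 0 with h0 | h0
  · exact ⟨Classical.arbitrary ι, by simp [h0]⟩
  · have : a * ⨆ j, f j < ⨆ i, b * f i := by
      rw [← ENNReal.mul_iSup]
      exact ENNReal.mul_lt_mul_left h0 hf hab
    obtain ⟨i, hi⟩ := lt_iSup_iff.1 this
    exact ⟨i, hi.le⟩

theorem exists_lt_and_dist_lt_of_compactSpace {X : Type*} [PseudoMetricSpace X] [CompactSpace X]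
    (y : ℕ → X) {ε : ℝ} (hε : 0 < ε) : ∃ i j, i < j ∧ dist (y i) (y j) < ε := by
  obtain ⟨a, φ, hφ, hlim⟩ := CompactSpace.tendsto_subseq y
  obtain ⟨N, hN⟩ := Metric.cauchySeq_iff'.1 hlim.cauchySeq ε hε
  exact ⟨φ N, φ (N + 1), hφ N.lt_succ_self, by rw [dist_comm]; exact hN (N + 1) N.le_succ⟩

theorem Metric.sub_le_dist_of_mem_iUnion_ball {X ι : Type*} [PseudoMetricSpace X] {c : ι → X}
    {r R : ℝ} {a z : X} (ha : a ∈ ⋃ i, ball (c i) r) (hz : z ∉ ⋃ i, ball (c i) R) :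
    R - r ≤ dist a z := by
  obtain ⟨i, hi⟩ := mem_iUnion.1 ha
  have hzi : R ≤ dist z (c i) := not_lt.1 fun h => hz (mem_iUnion.2 ⟨i, h⟩)
  rw [mem_ball] at hi
  linarith [dist_triangle z a (c i), dist_comm a z]

theorem MeasureTheory.measure_compl_eq_zero_of_forall_measure_ball_diff {X : Type*}
    [PseudoMetricSpace X] [CompactSpace X] [MeasurableSpace X] {μ : Measure X} {r : ℝ}
    (hr : 0 < r) {D : Set X} (h : ∀ z, μ (ball z r \ D) = 0) : μ Dᶜ = 0 := by
  obtain ⟨t, -, ht, hcov⟩ := finite_cover_balls_of_compact (isCompact_univ (X := X)) hr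
  refine measure_mono_null (fun p hp => ?_)
    ((measure_biUnion_null_iff ht.countable).2 fun z _ => h z)
  obtain ⟨z, hz, hpz⟩ := mem_iUnion₂.1 (hcov (mem_univ p))
  exact mem_iUnion₂.2 ⟨z, hz, hpz, hp⟩

namespace GreedyCenters

def FiveBallCover (X : Type*) [MetricSpace X] (ν : ℕ) (r : ℝ) : Prop :=
  ∀ z : X, ∃ F : Finset X, F.card ≤ ν ∧ ball z (5 * r) ⊆ ⋃ w ∈ F, ball w r

variable {X : Type*} [MetricSpace X]

def ballUnion (y : ℕ → X) (R : ℝ) (k : ℕ) : Set X := ⋃ i : Fin k, ball (y i) R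

noncomputable def greedySeq (next : Set X → X) (R : ℝ) (k : ℕ) : X :=
  next (⋃ i : Fin k, ball (greedySeq next R i) R)
termination_by k
decreasing_by exact i.isLt

theorem greedySeq_eq (next : Set X → X) (R : ℝ) (k : ℕ) :
    greedySeq next R k = next (ballUnion (greedySeq next R) R k) := by
  rw [greedySeq]
  rfl

section ballUnion

variable {y : ℕ → X} {R : ℝ} {k : ℕ}

@[simp]
theorem ballUnion_zero : ballUnion y R 0 = ∅ := iUnion_of_empty _

theorem ballUnion_succ : ballUnion y R (k + 1) = ballUnion y R k ∪ ball (y k) R := by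
  ext p
  simp [ballUnion, Fin.exists_fin_succ', or_comm]

theorem isOpen_ballUnion : IsOpen (ballUnion y R k) := isOpen_iUnion fun _ => isOpen_ball

theorem ball_subset_ballUnion {i : ℕ} (hik : i < k) : ball (y i) R ⊆ ballUnion y R k :=
  subset_iUnion (fun i : Fin k => ball (y i) R) ⟨i, hik⟩

theorem ballUnion_subset_ballUnion {R' : ℝ} (h : R ≤ R') : ballUnion y R k ⊆ ballUnion y R' k :=
  iUnion_mono fun _ => ball_subset_ball h

end ballUnion

variable [MeasurableSpace X] {μ : Measure X} {r : ℝ} {y : ℕ → X} {ν : ℕ} {β : ℝ≥0∞}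

def gain (μ : Measure X) (r : ℝ) (y : ℕ → X) (k : ℕ) : ℝ≥0∞ :=
  μ (ball (y k) r \ ballUnion y (5 * r) k)

/-- An exact maximiser of the gain need not exist; a choice within the factor `4/5` always does,
and the loss is paid for by the two-ball case of `exists_separated_centers`. -/
def IsGreedy (μ : Measure X) (r : ℝ) (y : ℕ → X) : Prop :=
  ∀ k, 4 * ⨆ z, μ (ball z r \ ballUnion y (5 * r) k) ≤ 5 * gain μ r y k

theorem exists_isGreedy [Nonempty X] (μ : Measure X) [IsFiniteMeasure μ] (r : ℝ) :
    ∃ y, IsGreedy μ r y := by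
  choose next hnext using fun D : Set X =>
    ENNReal.exists_mul_iSup_le_mul (f := fun z => μ (ball z r \ D))
      (ne_top_of_le_ne_top (measure_ne_top μ univ) (iSup_le fun _ => measure_mono (subset_univ _)))
      (by norm_num : (4 : ℝ≥0∞) < 5)
  refine ⟨greedySeq next (5 * r), fun k => ?_⟩
  have := hnext (ballUnion (greedySeq next (5 * r)) (5 * r) k)
  rwa [← greedySeq_eq next (5 * r) k] at this

theorem le_dist_of_gain_ne_zero {i j : ℕ} (hj : gain μ r y j ≠ 0) (hij : i < j) :
    4 * r ≤ dist (y i) (y j) := by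
  by_contra! h
  refine hj (measure_mono_null (sdiff_eq_empty.2 ?_).le measure_empty)
  exact (ball_subset_ball' (by rw [dist_comm]; linarith)).trans (ball_subset_ballUnion hij)

theorem exists_gain_eq_zero [CompactSpace X] (hr : 0 < r) : ∃ k, gain μ r y k = 0 := by
  by_contra! h
  obtain ⟨i, j, hij, hd⟩ := exists_lt_and_dist_lt_of_compactSpace y (by positivity : 0 < 4 * r)
  exact (le_dist_of_gain_ne_zero (h j) hij).not_gt hd

theorem measure_univ_le_of_gain_eq_zero [CompactSpace X] (hr : 0 < r) (hy : IsGreedy μ r y)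
    {k : ℕ} (hk : gain μ r y k = 0) : μ univ ≤ μ (ballUnion y (5 * r) k) := by
  have hnull : ∀ z, μ (ball z r \ ballUnion y (5 * r) k) = 0 := by
    have := hy k
    rw [hk, mul_zero, nonpos_iff_eq_zero, mul_eq_zero, ENNReal.iSup_eq_zero] at this
    exact this.resolve_left (by norm_num)
  simpa [measure_compl_eq_zero_of_forall_measure_ball_diff hr hnull] using
    measure_univ_le_add_compl (μ := μ) (ballUnion y (5 * r) k)

theorem measure_ballUnion_add_gain_le [OpensMeasurableSpace X] (hr : 0 ≤ r) (k : ℕ) :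
    μ (ballUnion y r k) + gain μ r y k ≤ μ (ballUnion y r (k + 1)) := by
  have hA : ballUnion y r k ⊆ ballUnion y (5 * r) k := ballUnion_subset_ballUnion (by linarith)
  calc μ (ballUnion y r k) + gain μ r y k
      ≤ μ (ballUnion y r k) + μ (ball (y k) r \ ballUnion y r k) := by
        gcongr
        exact measure_mono (sdiff_subset_sdiff_right hA)
    _ = μ (ballUnion y r (k + 1)) := by
        rw [← measure_union disjoint_sdiff_right (measurableSet_ball.diff
          isOpen_ballUnion.measurableSet), union_sdiff_self, ballUnion_succ]

theorem measure_ball_diff_le (hcov : FiveBallCover X ν r) (z : X) (D : Set X) :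
    μ (ball z (5 * r) \ D) ≤ ν * ⨆ w, μ (ball w r \ D) := by
  obtain ⟨F, hF, hsub⟩ := hcov z
  refine (measure_le_card_mul_of_subset_biUnion (t := fun w => ball w r \ D) ?_
    fun w _ => le_iSup (fun w => μ (ball w r \ D)) w).trans (by gcongr)
  rintro p ⟨hp, hpD⟩
  obtain ⟨w, hw, hpw⟩ := mem_iUnion₂.1 (hsub hp)
  exact mem_iUnion₂.2 ⟨w, hw, hpw, hpD⟩

theorem two_mul_measure_ball_le (hcov : FiveBallCover X ν r)
    (hball : ∀ x, 2 * ν * μ (ball x r) ≤ β) (z : X) :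
    2 * μ (ball z (5 * r)) ≤ β :=
  calc 2 * μ (ball z (5 * r)) ≤ 2 * (ν * ⨆ w, μ (ball w r)) := by
        gcongr
        simpa using measure_ball_diff_le hcov z ∅
    _ = ⨆ w, 2 * ν * μ (ball w r) := by rw [← mul_assoc, ENNReal.mul_iSup]
    _ ≤ β := iSup_le hball

theorem four_mul_measure_ballUnion_succ_le (hcov : FiveBallCover X ν r)
    (hy : IsGreedy μ r y) (k : ℕ) :
    4 * μ (ballUnion y (5 * r) (k + 1)) ≤
      4 * μ (ballUnion y (5 * r) k) + 5 * ν * gain μ r y k :=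
  calc 4 * μ (ballUnion y (5 * r) (k + 1))
      ≤ 4 * (μ (ballUnion y (5 * r) k) + μ (ball (y k) (5 * r) \ ballUnion y (5 * r) k)) := by
        rw [ballUnion_succ, ← union_sdiff_self]
        gcongr
        exact measure_union_le _ _
    _ ≤ 4 * μ (ballUnion y (5 * r) k) + ν * (4 * ⨆ z, μ (ball z r \ ballUnion y (5 * r) k)) := by
        rw [mul_add, mul_left_comm]
        gcongr
        exact measure_ball_diff_le hcov _ _
    _ ≤ 4 * μ (ballUnion y (5 * r) k) + ν * (5 * gain μ r y k) := by grw [hy k]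
    _ = 4 * μ (ballUnion y (5 * r) k) + 5 * ν * gain μ r y k := by ring

/-- Each new `5r`-ball adds at most `5ν/4` times the mass the corresponding `r`-ball adds. -/
theorem four_mul_measure_ballUnion_le [OpensMeasurableSpace X] (hr : 0 ≤ r)
    (hcov : FiveBallCover X ν r) (hy : IsGreedy μ r y) (k : ℕ) :
    4 * μ (ballUnion y (5 * r) k) ≤ 5 * ν * μ (ballUnion y r k) := by
  induction k with
  | zero => simp
  | succ k ih =>
    calc 4 * μ (ballUnion y (5 * r) (k + 1))
        ≤ 4 * μ (ballUnion y (5 * r) k) + 5 * ν * gain μ r y k :=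
          four_mul_measure_ballUnion_succ_le hcov hy k
      _ ≤ 5 * ν * (μ (ballUnion y r k) + gain μ r y k) := by rw [mul_add]; gcongr
      _ ≤ 5 * ν * μ (ballUnion y r (k + 1)) := by
          gcongr
          exact measure_ballUnion_add_gain_le hr k

theorem nine_mul_gain_le (hy : IsGreedy μ r y) (k : ℕ) :
    9 * gain μ r y k ≤ 5 * (μ (ball (y 0) r) + μ (ball (y k) r)) := by
  have hk : gain μ r y k ≤ μ (ball (y k) r) := measure_mono sdiff_subset
  have hk0 : 4 * μ (ball (y k) r) ≤ 5 * μ (ball (y 0) r) :=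
    calc 4 * μ (ball (y k) r) ≤ 4 * ⨆ z, μ (ball z r \ ballUnion y (5 * r) 0) := by
          gcongr
          simpa using le_iSup (fun z => μ (ball z r)) (y k)
      _ ≤ 5 * gain μ r y 0 := hy 0
      _ ≤ 5 * μ (ball (y 0) r) := by grw [gain, sdiff_subset]
  calc 9 * gain μ r y k = 4 * gain μ r y k + 5 * gain μ r y k := by ring
    _ ≤ 5 * μ (ball (y 0) r) + 5 * μ (ball (y k) r) := by grw [hk, hk0]
    _ = 5 * (μ (ball (y 0) r) + μ (ball (y k) r)) := by ring

theorem measure_ballUnion_le [OpensMeasurableSpace X] (hr : 0 ≤ r)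
    (hcov : FiveBallCover X ν r) (hy : IsGreedy μ r y) (hball : ∀ x, 2 * ν * μ (ball x r) ≤ β)
    (hpair : ∀ x z, 4 * r ≤ dist x z → 2 * ν * (μ (ball x r) + μ (ball z r)) ≤ β) :
    ∀ K, (∀ j < K, 2 * ν * μ (ballUnion y r j) ≤ β ∧ gain μ r y j ≠ 0) →
      μ (ballUnion y (5 * r) K) ≤ β
  | 0, _ => by simp
  | 1, _ => by
    have := two_mul_measure_ball_le hcov hball (y 0)
    rw [ballUnion_succ, ballUnion_zero, empty_union]
    exact le_trans (le_mul_of_one_le_left' one_le_two) this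
  | k + 2, hK => by
    obtain ⟨hA, hg⟩ := hK (k + 1) (by omega)
    -- `y (k + 1)` is `4r`-far from `y 0`, so `hpair` bounds the last gain.
    have hlast : 18 * ν * gain μ r y (k + 1) ≤ 5 * β :=
      calc 18 * ν * gain μ r y (k + 1) = 2 * ν * (9 * gain μ r y (k + 1)) := by ring
        _ ≤ 2 * ν * (5 * (μ (ball (y 0) r) + μ (ball (y (k + 1)) r))) := by
            grw [nine_mul_gain_le hy]
        _ = 5 * (2 * ν * (μ (ball (y 0) r) + μ (ball (y (k + 1)) r))) := by ring
        _ ≤ 5 * β := by grw [hpair _ _ (le_dist_of_gain_ne_zero hg k.succ_pos)]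
    have h72 : 72 * μ (ballUnion y (5 * r) (k + 2)) ≤ 72 * β :=
      calc 72 * μ (ballUnion y (5 * r) (k + 2))
          = 18 * (4 * μ (ballUnion y (5 * r) (k + 1 + 1))) := by ring
        _ ≤ 18 * (4 * μ (ballUnion y (5 * r) (k + 1)) + 5 * ν * gain μ r y (k + 1)) := by
            grw [four_mul_measure_ballUnion_succ_le hcov hy]
        _ ≤ 18 * (5 * ν * μ (ballUnion y r (k + 1)) + 5 * ν * gain μ r y (k + 1)) := by
            grw [four_mul_measure_ballUnion_le hr hcov hy]
        _ = 45 * (2 * ν * μ (ballUnion y r (k + 1))) + 5 * (18 * ν * gain μ r y (k + 1)) := by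
            ring
        _ ≤ 45 * β + 5 * (5 * β) := by grw [hA, hlast]
        _ ≤ 72 * β := by ring_nf; gcongr; norm_num
    exact (ENNReal.mul_le_mul_iff_right (by norm_num) (by norm_num)).1 h72

theorem exists_centers_of_isGreedy [CompactSpace X] [OpensMeasurableSpace X] (hr : 0 < r)
    (hcov : FiveBallCover X ν r) (hy : IsGreedy μ r y) (hball : ∀ x, 2 * ν * μ (ball x r) ≤ β)
    (hβ : 2 * β ≤ μ univ)
    (hpair : ∀ x z, 4 * r ≤ dist x z → 2 * ν * (μ (ball x r) + μ (ball z r)) ≤ β) :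
    ∃ K, (∀ i j : Fin K, i ≠ j → 4 * r ≤ dist (y i) (y j)) ∧
      β ≤ 2 * ν * μ (ballUnion y r K) ∧ μ (ballUnion y (5 * r) K) ≤ β := by
  have hstop : ∀ k, gain μ r y k = 0 → β ≤ 2 * ν * μ (ballUnion y r k) := fun k hk => by
    have h8 : 8 * β ≤ 8 * (2 * ν * μ (ballUnion y r k)) :=
      calc 8 * β = 4 * (2 * β) := by ring
        _ ≤ 4 * μ (ballUnion y (5 * r) k) := by
            grw [hβ, measure_univ_le_of_gain_eq_zero hr hy hk]
        _ ≤ 5 * ν * μ (ballUnion y r k) := four_mul_measure_ballUnion_le hr.le hcov hy k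
        _ ≤ 8 * (2 * ν * μ (ballUnion y r k)) := by ring_nf; gcongr; norm_num
    exact (ENNReal.mul_le_mul_iff_right (by norm_num) (by norm_num)).1 h8
  classical
  have hex : ∃ k, β ≤ 2 * ν * μ (ballUnion y r k) :=
    (exists_gain_eq_zero hr).imp fun k => hstop k
  have hbefore : ∀ j < Nat.find hex, 2 * ν * μ (ballUnion y r j) ≤ β ∧ gain μ r y j ≠ 0 :=
    fun j hj => ⟨(not_le.1 (Nat.find_min hex hj)).le, fun h0 => Nat.find_min hex hj (hstop j h0)⟩
  refine ⟨Nat.find hex, fun i j hij => ?_, Nat.find_spec hex,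
    measure_ballUnion_le hr.le hcov hy hball hpair _ hbefore⟩
  rcases Fin.lt_or_lt_of_ne hij with h | h
  · exact le_dist_of_gain_ne_zero (hbefore j j.isLt).2 h
  · exact dist_comm (y j) (y i) ▸ le_dist_of_gain_ne_zero (hbefore i i.isLt).2 h

end GreedyCenters

open GreedyCenters in
theorem exists_separated_centers {X : Type*} [MetricSpace X] [CompactSpace X] [MeasurableSpace X]
    [OpensMeasurableSpace X] {μ : Measure X} [IsFiniteMeasure μ] {r : ℝ} {ν : ℕ} {β : ℝ≥0∞}
    (hr : 0 < r) (hcov : FiveBallCover X ν r)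
    (hball : ∀ x, 2 * ν * μ (ball x r) ≤ β) (hβ : 2 * β ≤ μ univ) :
    ∃ (l : ℕ) (c : Fin l → X), (∀ i j, i ≠ j → 4 * r ≤ dist (c i) (c j)) ∧
      β ≤ 2 * ν * μ (⋃ i, ball (c i) r) ∧ μ (⋃ i, ball (c i) (5 * r)) ≤ β := by
  rcases isEmpty_or_nonempty X with hX | hX
  · have hβ0 : β = 0 := by simpa [univ_eq_empty_iff.2 hX] using hβ
    exact ⟨0, finZeroElim, fun i => i.elim0, by simp [hβ0], by simp⟩
  by_cases hpair : ∃ x z, 4 * r ≤ dist x z ∧ β ≤ 2 * ν * (μ (ball x r) + μ (ball z r))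
  · obtain ⟨x, z, hxz, hβxz⟩ := hpair
    have hunion : ∀ R, (⋃ i : Fin 2, ball (![x, z] i) R) = ball x R ∪ ball z R := fun R => by
      simp [Set.ext_iff, Fin.exists_fin_two]
    refine ⟨2, ![x, z], ?_, ?_, ?_⟩
    · intro i j hij
      fin_cases i <;> fin_cases j <;> simp_all [dist_comm]
    · rwa [hunion, measure_union (ball_disjoint_ball (by linarith)) measurableSet_ball]
    · have h2 : 2 * μ (ball x (5 * r) ∪ ball z (5 * r)) ≤ 2 * β :=
        calc 2 * μ (ball x (5 * r) ∪ ball z (5 * r))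
            ≤ 2 * μ (ball x (5 * r)) + 2 * μ (ball z (5 * r)) := by
              grw [measure_union_le, mul_add]
          _ ≤ 2 * β := by
              grw [two_mul_measure_ball_le hcov hball, two_mul_measure_ball_le hcov hball, two_mul]
      rw [hunion]
      exact (ENNReal.mul_le_mul_iff_right two_ne_zero ENNReal.ofNat_ne_top).1 h2
  push Not at hpair
  obtain ⟨y, hy⟩ := exists_isGreedy μ r
  obtain ⟨K, hsep, hA, hD⟩ := exists_centers_of_isGreedy hr hcov hy hball hβ
    fun x z hxz => (hpair x z hxz).le
  exact ⟨K, fun i => y i, hsep, hA, hD⟩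

theorem stmt10_general {X : Type*} [MetricSpace X] [CompactSpace X] [MeasurableSpace X] [BorelSpace X]
    (ς : Measure X) [IsFiniteMeasure ς]
    (N : ℝ → ℕ)
    (hcov : ∀ s : ℝ, 0 < s → ∀ y : X, ∃ F : Finset X,
      F.card ≤ N s ∧ ball y (5*s) ⊆ ⋃ z ∈ F, ball z s)
    (β : ENNReal) (hβ : β ≤ ς Set.univ / 2)
    (r : ℝ) (hr : 0 < r)
    (hball : ∀ x : X, ς (ball x r) ≤ β / (2 * (N r : ENNReal))) :
    ∃ (l : ℕ) (c : Fin l → X),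
      (∀ i j : Fin l, i ≠ j → 4*r ≤ dist (c i) (c j)) ∧
      IsOpen (⋃ i, ball (c i) r) ∧ IsOpen (⋃ i, ball (c i) (5*r)) ∧
      (⋃ i, ball (c i) r) ⊆ (⋃ i, ball (c i) (5*r)) ∧
      β / (2 * (N r : ENNReal)) ≤ ς (⋃ i, ball (c i) r) ∧
      ς (⋃ i, ball (c i) (5*r)) ≤ β ∧
      (∀ a ∈ ⋃ i, ball (c i) r, ∀ y : X, y ∉ (⋃ i, ball (c i) (5*r)) →
        4*r ≤ dist a y) := by
  obtain ⟨l, c, hsep, hA, hD⟩ := exists_separated_centers hr (hcov r hr)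
    (fun x => ENNReal.mul_le_of_le_div' (hball x)) (ENNReal.mul_le_of_le_div' hβ)
  refine ⟨l, c, hsep, isOpen_iUnion fun _ => isOpen_ball, isOpen_iUnion fun _ => isOpen_ball,
    iUnion_mono fun _ => ball_subset_ball (by linarith), ENNReal.div_le_of_le_mul' hA, hD,
    fun a ha z hz => ?_⟩
  linarith [sub_le_dist_of_mem_iUnion_ball ha hz]

/-- Lemma 5.2 (genCM): in a compact metric measure space with the covering property
(every ball of radius `5s` covered by `N(s)` balls of radius `s`), if `β ≤ ς(X)/2`
and every ball of radius `r` has measure at most `β/(2N(r))`, then there are open sets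
`A = ⋃ B(xᵢ,r) ⊆ D = ⋃ B(xᵢ,5r)` with `4r`-separated centers, `ς(A) ≥ β/(2N(r))`,
`ς(D) ≤ β`, and `dist(A, X\D) ≥ 4r`. -/
theorem stmt10 {X : Type*} [MetricSpace X] [CompactSpace X] [MeasurableSpace X] [BorelSpace X]
    (ς : Measure X) [IsFiniteMeasure ς]
    (N : ℝ → ℕ)
    (hcov : ∀ s : ℝ, 0 < s → ∀ y : X, ∃ F : Finset X,
      F.card ≤ N s ∧ ball y (5*s) ⊆ ⋃ z ∈ F, ball z s)
    (β : ENNReal) (hβpos : 0 < β) (hβ : β ≤ ς Set.univ / 2)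
    (r : ℝ) (hr : 0 < r)
    (hball : ∀ x : X, ς (ball x r) ≤ β / (2 * (N r : ENNReal))) :
    ∃ (l : ℕ) (c : Fin l → X),
      (∀ i j : Fin l, i ≠ j → 4*r ≤ dist (c i) (c j)) ∧
      IsOpen (⋃ i, ball (c i) r) ∧ IsOpen (⋃ i, ball (c i) (5*r)) ∧
      (⋃ i, ball (c i) r) ⊆ (⋃ i, ball (c i) (5*r)) ∧
      β / (2 * (N r : ENNReal)) ≤ ς (⋃ i, ball (c i) r) ∧
      ς (⋃ i, ball (c i) (5*r)) ≤ β ∧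
      (∀ a ∈ ⋃ i, ball (c i) r, ∀ y : X, y ∉ (⋃ i, ball (c i) (5*r)) →
        4*r ≤ dist a y) :=
  stmt10_general ς N hcov β hβ r hr hball
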